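/- If a row vector ⟨Φ(ξ)| satisfies ⟨Φ(ξ)| M(ξ) = Λ ⟨Φ(ξ)| then the column vector |Ψ(ξ')⟩ = U_GC |Φ(ξ)⟩ (the transpose of ⟨Φ(ξ)| multiplied by U_GC) satisfies M(ξ') |Ψ(ξ')⟩ = Λ |Ψ(ξ')⟩, where ξ' = (γδ/(αβ))(q/p)^{N-1} ξ^{-1}. -/

import Mathlib

open Matrix Finset

/-- Embed a one-site (2×2) matrix at site `i` of the lattice `(ℂ²)^{⊗N}`. -/
noncomputable def siteOp {N : ℕ} (A : Matrix (Fin 2) (Fin 2) ℂ) (i : Fin N) :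
    Matrix (Fin N → Fin 2) (Fin N → Fin 2) ℂ :=
  fun τ τ' => A (τ i) (τ' i) * (if ∀ j, j ≠ i → τ j = τ' j then 1 else 0)

/-- Embed a two-site (4×4) matrix at sites `i, i'` of the lattice `(ℂ²)^{⊗N}`. -/
noncomputable def siteOp2 {N : ℕ} (A : Matrix (Fin 2 × Fin 2) (Fin 2 × Fin 2) ℂ)
    (i i' : Fin N) : Matrix (Fin N → Fin 2) (Fin N → Fin 2) ℂ :=
  fun τ τ' => A (τ i, τ i') (τ' i, τ' i')
    * (if ∀ j, j ≠ i → j ≠ i' → τ j = τ' j then 1 else 0)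

/-- Left boundary matrix `√(αγ) B(ξ) = [[-α, ξ⁻¹γ], [ξα, -γ]]`. -/
noncomputable def Bleft (α γ ξ : ℂ) : Matrix (Fin 2) (Fin 2) ℂ :=
  !![-α, ξ⁻¹ * γ; ξ * α, -γ]

/-- Right boundary matrix `√(βδ) B̄ = [[-δ, β], [δ, -β]]`. -/
noncomputable def Bright (β δ : ℂ) : Matrix (Fin 2) (Fin 2) ℂ :=
  !![-δ, β; δ, -β]

/-- Bulk hopping matrix `√(pq) w` on ℂ² ⊗ ℂ² (product basis): nonzero entries
`(01,01) = -q`, `(01,10) = p`, `(10,01) = q`, `(10,10) = -p`. -/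
noncomputable def wBulk (p q : ℂ) : Matrix (Fin 2 × Fin 2) (Fin 2 × Fin 2) ℂ :=
  Matrix.single (0, 1) (0, 1) (-q) + Matrix.single (0, 1) (1, 0) p
    + Matrix.single (1, 0) (0, 1) q + Matrix.single (1, 0) (1, 0) (-p)

/-- The deformed ASEP transition matrix `M(ξ)` on a lattice of `N = n+1` sites:
`M(ξ) = √(αγ) B₁(ξ) + Σ_{i=1}^{N-1} √(pq) w_{i,i+1} + √(βδ) B̄_N`. -/
noncomputable def Masep (n : ℕ) (p q α β γ δ ξ : ℂ) :
    Matrix (Fin (n + 1) → Fin 2) (Fin (n + 1) → Fin 2) ℂ :=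
  siteOp (Bleft α γ ξ) 0 + (∑ i : Fin n, siteOp2 (wBulk p q) i.castSucc i.succ)
    + siteOp (Bright β δ) (Fin.last n)

/-- The Gallavotti–Cohen conjugation matrix
`U_GC = ⊗_{i=1}^N diag(1, (δ/β)(q/p)^{N-i})`. -/
noncomputable def Ugc (n : ℕ) (p q β δ : ℂ) :
    Matrix (Fin (n + 1) → Fin 2) (Fin (n + 1) → Fin 2) ℂ :=
  Matrix.diagonal fun τ =>
    ∏ i : Fin (n + 1), if τ i = 1 then (δ / β) * (q / p) ^ (n - (i : ℕ)) else 1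


/-! ### Auxiliary machinery -/

lemma fin2cases (x : Fin 2) : x = 0 ∨ x = 1 := by
  fin_cases x
  · exact Or.inl rfl
  · exact Or.inr rfl

/-- The diagonal weight of `U_GC`. -/
noncomputable def dGC (n : ℕ) (p q β δ : ℂ) (τ : Fin (n + 1) → Fin 2) : ℂ :=
  ∏ i : Fin (n + 1), if τ i = 1 then (δ / β) * (q / p) ^ (n - (i : ℕ)) else 1

/-- Single-site conjugation lemma. -/
lemma site_key (n : ℕ) (p q β δ : ℂ) (A A' : Matrix (Fin 2) (Fin 2) ℂ)
    (i : Fin (n + 1))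
    (h : ∀ a b : Fin 2,
      A' a b * (if b = 1 then (δ / β) * (q / p) ^ (n - (i : ℕ)) else 1)
        = (if a = 1 then (δ / β) * (q / p) ^ (n - (i : ℕ)) else 1) * A b a)
    (τ σ : Fin (n + 1) → Fin 2) :
    siteOp A' i τ σ * dGC n p q β δ σ = dGC n p q β δ τ * siteOp A i σ τ := by
  by_cases hC : ∀ j, j ≠ i → τ j = σ j
  · have hC' : ∀ j, j ≠ i → σ j = τ j := fun j hj => (hC j hj).symm
    simp only [siteOp]
    rw [if_pos hC, if_pos hC', mul_one, mul_one, dGC, dGC, Fintype.prod_eq_mul_prod_compl i, Fintype.prod_eq_mul_prod_compl i]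
    have hP : (∏ j ∈ ({i}ᶜ : Finset (Fin (n+1))),
          if σ j = 1 then (δ / β) * (q / p) ^ (n - (j : ℕ)) else 1)
        = ∏ j ∈ ({i}ᶜ : Finset (Fin (n+1))),
          if τ j = 1 then (δ / β) * (q / p) ^ (n - (j : ℕ)) else 1 := by
      refine Finset.prod_congr rfl fun j hj => ?_
      rw [Finset.mem_compl, Finset.mem_singleton] at hj
      rw [hC j hj]
    rw [hP]
    have := h (τ i) (σ i)
    set P := ∏ j ∈ ({i}ᶜ : Finset (Fin (n+1))),
          if τ j = 1 then (δ / β) * (q / p) ^ (n - (j : ℕ)) else 1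
    linear_combination P * this
  · have hC' : ¬ ∀ j, j ≠ i → σ j = τ j := fun h' => hC fun j hj => (h' j hj).symm
    simp [siteOp, hC, hC']

/-- Two-site conjugation lemma. -/
lemma site2_key (n : ℕ) (p q β δ : ℂ) (A A' : Matrix (Fin 2 × Fin 2) (Fin 2 × Fin 2) ℂ)
    (i i' : Fin (n + 1)) (hii : i ≠ i')
    (h : ∀ a b a' b' : Fin 2,
      A' (a, b) (a', b')
          * ((if a' = 1 then (δ / β) * (q / p) ^ (n - (i : ℕ)) else 1)
            * (if b' = 1 then (δ / β) * (q / p) ^ (n - (i' : ℕ)) else 1))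
        = ((if a = 1 then (δ / β) * (q / p) ^ (n - (i : ℕ)) else 1)
            * (if b = 1 then (δ / β) * (q / p) ^ (n - (i' : ℕ)) else 1))
          * A (a', b') (a, b))
    (τ σ : Fin (n + 1) → Fin 2) :
    siteOp2 A' i i' τ σ * dGC n p q β δ σ = dGC n p q β δ τ * siteOp2 A i i' σ τ := by
  by_cases hC : ∀ j, j ≠ i → j ≠ i' → τ j = σ j
  · have hC' : ∀ j, j ≠ i → j ≠ i' → σ j = τ j := fun j hj hj' => (hC j hj hj').symm
    simp only [siteOp2]
    rw [if_pos hC, if_pos hC', mul_one, mul_one]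
    have hsplit : ∀ ρ : Fin (n + 1) → Fin 2,
        dGC n p q β δ ρ
          = ((if ρ i = 1 then (δ / β) * (q / p) ^ (n - (i : ℕ)) else 1)
              * (if ρ i' = 1 then (δ / β) * (q / p) ^ (n - (i' : ℕ)) else 1))
            * ∏ j ∈ ({i, i'}ᶜ : Finset (Fin (n+1))),
                if ρ j = 1 then (δ / β) * (q / p) ^ (n - (j : ℕ)) else 1 := by
      intro ρ
      rw [dGC, ← Finset.prod_mul_prod_compl ({i, i'} : Finset (Fin (n+1))),
        Finset.prod_pair hii]
    rw [hsplit τ, hsplit σ]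
    have hP : (∏ j ∈ ({i, i'}ᶜ : Finset (Fin (n+1))),
          if σ j = 1 then (δ / β) * (q / p) ^ (n - (j : ℕ)) else 1)
        = ∏ j ∈ ({i, i'}ᶜ : Finset (Fin (n+1))),
          if τ j = 1 then (δ / β) * (q / p) ^ (n - (j : ℕ)) else 1 := by
      refine Finset.prod_congr rfl fun j hj => ?_
      rw [Finset.mem_compl, Finset.mem_insert, not_or, Finset.mem_singleton] at hj
      rw [hC j hj.1 hj.2]
    rw [hP]
    have := h (τ i) (τ i') (σ i) (σ i')
    set P := ∏ j ∈ ({i, i'}ᶜ : Finset (Fin (n+1))),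
          if τ j = 1 then (δ / β) * (q / p) ^ (n - (j : ℕ)) else 1
    linear_combination P * this
  · have hC' : ¬ ∀ j, j ≠ i → j ≠ i' → σ j = τ j :=
      fun h' => hC fun j hj hj' => (h' j hj hj').symm
    simp [siteOp2, hC, hC']

/-- If `⟨Φ(ξ)|` is a left eigenvector of `M(ξ)` with eigenvalue `Λ`, then
`|Ψ(ξ')⟩ = U_GC |Φ(ξ)⟩` is a right eigenvector of `M(ξ')` with the same
eigenvalue, where `ξ' = (γδ/(αβ))(q/p)^{N-1} ξ⁻¹`. -/
theorem stmt9 (n : ℕ) (p q α β γ δ ξ Λ : ℂ)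
    (hp : p ≠ 0) (hq : q ≠ 0) (hα : α ≠ 0) (hβ : β ≠ 0) (hγ : γ ≠ 0) (hδ : δ ≠ 0)
    (hξ : ξ ≠ 0)
    (Φ : (Fin (n + 1) → Fin 2) → ℂ)
    (hΦ : Matrix.vecMul Φ (Masep n p q α β γ δ ξ) = Λ • Φ) :
    (Masep n p q α β γ δ (γ * δ / (α * β) * (q / p) ^ n * ξ⁻¹)).mulVec
        ((Ugc n p q β δ).mulVec Φ)
      = Λ • ((Ugc n p q β δ).mulVec Φ) := by
  set ξ' : ℂ := γ * δ / (α * β) * (q / p) ^ n * ξ⁻¹ with hξ'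
  have hqp : (q / p : ℂ) ≠ 0 := div_ne_zero hq hp
  have hqpn : ((q / p : ℂ)) ^ n ≠ 0 := pow_ne_zero _ hqp
  -- left boundary entrywise identity
  have hleft : ∀ a b : Fin 2,
      Bleft α γ ξ' a b
          * (if b = 1 then (δ / β) * (q / p) ^ (n - (((0 : Fin (n+1))) : ℕ)) else 1)
        = (if a = 1 then (δ / β) * (q / p) ^ (n - (((0 : Fin (n+1))) : ℕ)) else 1)
          * Bleft α γ ξ b a := by
    intro a b
    have h0 : (((0 : Fin (n+1))) : ℕ) = 0 := rfl
    fin_cases a <;> fin_cases b <;>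
      simp only [h0, Nat.sub_zero, Bleft, Fin.zero_eta, Fin.mk_one, Matrix.of_apply,
        Matrix.cons_val', Matrix.cons_val_zero, Matrix.cons_val_one, Matrix.head_cons,
        Matrix.empty_val', Matrix.cons_val_fin_one, Fin.one_eq_zero_iff,
        Fin.zero_eq_one_iff, Nat.succ_ne_self, OfNat.ofNat_ne_one, one_ne_zero,
        ite_true, ite_false, if_true, if_false]
    · ring
    · rw [hξ']; field_simp
    · rw [hξ']; field_simp
    · ring
  -- right boundary entrywise identity
  have hright : ∀ a b : Fin 2,
      Bright β δ a b
          * (if b = 1 then (δ / β) * (q / p) ^ (n - ((Fin.last n : Fin (n+1)) : ℕ)) else 1)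
        = (if a = 1 then (δ / β) * (q / p) ^ (n - ((Fin.last n : Fin (n+1)) : ℕ)) else 1)
          * Bright β δ b a := by
    intro a b
    have h0 : ((Fin.last n : Fin (n+1)) : ℕ) = n := rfl
    fin_cases a <;> fin_cases b <;>
      simp only [h0, Nat.sub_self, pow_zero, mul_one, Bright, Fin.zero_eta, Fin.mk_one,
        Matrix.of_apply, Matrix.cons_val', Matrix.cons_val_zero, Matrix.cons_val_one,
        Matrix.head_cons, Matrix.empty_val', Matrix.cons_val_fin_one,
        Fin.one_eq_zero_iff, Fin.zero_eq_one_iff, Nat.succ_ne_self,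
        OfNat.ofNat_ne_one, one_ne_zero, ite_true, ite_false, if_true, if_false]
    · ring
    · field_simp
    · field_simp
    · ring
  -- bulk entrywise identity
  have hbulk : ∀ i : Fin n, ∀ a b a' b' : Fin 2,
      wBulk p q (a, b) (a', b')
          * ((if a' = 1 then (δ / β) * (q / p) ^ (n - ((i.castSucc : Fin (n+1)) : ℕ)) else 1)
            * (if b' = 1 then (δ / β) * (q / p) ^ (n - ((i.succ : Fin (n+1)) : ℕ)) else 1))
        = ((if a = 1 then (δ / β) * (q / p) ^ (n - ((i.castSucc : Fin (n+1)) : ℕ)) else 1)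
            * (if b = 1 then (δ / β) * (q / p) ^ (n - ((i.succ : Fin (n+1)) : ℕ)) else 1))
          * wBulk p q (a', b') (a, b) := by
    intro i a b a' b'
    have hlt : (i : ℕ) < n := i.isLt
    have hc : ((i.castSucc : Fin (n+1)) : ℕ) = (i : ℕ) := rfl
    have hs : ((i.succ : Fin (n+1)) : ℕ) = (i : ℕ) + 1 := rfl
    have hni : n - (i : ℕ) = (n - ((i : ℕ) + 1)) + 1 := by omega
    have hpq : q / p * p = q := div_mul_cancel₀ q hp
    fin_cases a <;> fin_cases b <;> fin_cases a' <;> fin_cases b' <;>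
      simp only [hc, hs, hni, pow_succ, wBulk, Matrix.single, Matrix.add_apply,
        Matrix.of_apply, Prod.mk.injEq, Fin.zero_eta, Fin.mk_one, Fin.one_eq_zero_iff,
        Fin.zero_eq_one_iff, Nat.succ_ne_self, OfNat.ofNat_ne_one, one_ne_zero,
        and_true, and_false, true_and, false_and, and_self, ite_true, ite_false,
        if_true, if_false] <;>
      first
        | ring1
        | linear_combination (δ / β * (q / p) ^ (n - ((i : ℕ) + 1))) * hpq
        | linear_combination (-(δ / β) * (q / p) ^ (n - ((i : ℕ) + 1))) * hpq
  -- combined entrywise conjugation identity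
  have key : ∀ τ σ : Fin (n + 1) → Fin 2,
      Masep n p q α β γ δ ξ' τ σ * dGC n p q β δ σ
        = dGC n p q β δ τ * Masep n p q α β γ δ ξ σ τ := by
    intro τ σ
    simp only [Masep, Matrix.add_apply, Matrix.sum_apply, add_mul, mul_add,
      Finset.sum_mul, Finset.mul_sum]
    rw [site_key n p q β δ (Bleft α γ ξ) (Bleft α γ ξ') 0 hleft τ σ,
      site_key n p q β δ (Bright β δ) (Bright β δ) (Fin.last n) hright τ σ]
    congr 2
    refine Finset.sum_congr rfl fun i _ => ?_
    exact site2_key n p q β δ (wBulk p q) (wBulk p q) i.castSucc i.succ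
      (Fin.castSucc_lt_succ (i := i)).ne (hbulk i) τ σ
  -- conclude
  funext τ
  have hU : ∀ ρ : Fin (n + 1) → Fin 2,
      (Ugc n p q β δ).mulVec Φ ρ = dGC n p q β δ ρ * Φ ρ := by
    intro ρ
    simp [Ugc, Matrix.mulVec_diagonal, dGC]
  have hv : Matrix.vecMul Φ (Masep n p q α β γ δ ξ) τ = Λ * Φ τ := by
    rw [hΦ]; simp
  calc (Masep n p q α β γ δ ξ').mulVec ((Ugc n p q β δ).mulVec Φ) τ
      = ∑ σ, Masep n p q α β γ δ ξ' τ σ * (dGC n p q β δ σ * Φ σ) := by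
        rw [show (Ugc n p q β δ) *ᵥ Φ = fun ρ => dGC n p q β δ ρ * Φ ρ from funext hU]
        simp only [Matrix.mulVec, dotProduct]
    _ = ∑ σ, dGC n p q β δ τ * (Φ σ * Masep n p q α β γ δ ξ σ τ) := by
        refine Finset.sum_congr rfl fun σ _ => ?_
        have := key τ σ
        linear_combination Φ σ * this
    _ = dGC n p q β δ τ * (Matrix.vecMul Φ (Masep n p q α β γ δ ξ) τ) := by
        rw [← Finset.mul_sum]
        simp [Matrix.vecMul, dotProduct]
    _ = Λ • ((Ugc n p q β δ).mulVec Φ) τ := by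
        rw [hv, hU τ, smul_eq_mul]; ring
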